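/- Let two white rooks be on squares r₁ = (a, y₁) and r₂ = (c, y₂) with y₁ ≠ y₂ (two distinct ranks), and let the white king be on a square K whose rank is different from both y₁ and y₂. Then every square s whose rank is y₁ or y₂ and which is different from r₁ and r₂ is attacked by the rook on r₁ or by the rook on r₂ given blockers {r₁, r₂, K}. (This is the invariant used in the paper's Lemma 17: the two rooks fully cover the two ranks ahead of the white king, so the king can safely advance between them towards the edge.) -/

import Mathlib

/-- A chessboard square: (file, rank) coordinates. -/
abbrev Square := Fin 8 × Fin 8

/-- File of a square, as an integer. -/
def fz (s : Square) : ℤ := (s.1 : ℤ)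

/-- Rank of a square, as an integer. -/
def rz (s : Square) : ℤ := (s.2 : ℤ)

/-- A square as a point of `ℤ × ℤ`. -/
def zpt (s : Square) : ℤ × ℤ := (fz s, rz s)

/-- Chebyshev distance between two squares. -/
def cheb (p q : Square) : ℤ := max |fz p - fz q| |rz p - rz q|

/-- Two squares are king-adjacent: distinct and at Chebyshev distance exactly 1. -/
def kingAdj (p q : Square) : Prop := p ≠ q ∧ cheb p q = 1

/-- `t` lies strictly between `p` and `q` on the line through `p` and `q`:
`t` is collinear with `p` and `q`, distinct from both, and lies within the
bounding box of the segment. -/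
def strictlyBetween (p t q : ℤ × ℤ) : Prop :=
  (t.1 - p.1) * (q.2 - p.2) = (t.2 - p.2) * (q.1 - p.1) ∧
  t ≠ p ∧ t ≠ q ∧
  min p.1 q.1 ≤ t.1 ∧ t.1 ≤ max p.1 q.1 ∧
  min p.2 q.2 ≤ t.2 ∧ t.2 ≤ max p.2 q.2

/-- A rook on `r` attacks `s` given blockers `B`: `r ≠ s`, they share a file or
a rank, and no blocker lies strictly between them on that line. -/
def rookAttacks (B : Set Square) (r s : Square) : Prop :=
  r ≠ s ∧ (r.1 = s.1 ∨ r.2 = s.2) ∧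
  ∀ t ∈ B, ¬ strictlyBetween (zpt r) (zpt t) (zpt s)

/-- A queen on `q` attacks `s` given blockers `B`: `q ≠ s`, they share a file,
a rank, or a diagonal, and no blocker lies strictly between them on that line. -/
def queenAttacks (B : Set Square) (q s : Square) : Prop :=
  q ≠ s ∧ (q.1 = s.1 ∨ q.2 = s.2 ∨ |fz q - fz s| = |rz q - rz s|) ∧
  ∀ t ∈ B, ¬ strictlyBetween (zpt q) (zpt t) (zpt s)

theorem not_strictlyBetween_left (p q : ℤ × ℤ) : ¬ strictlyBetween p p q :=
  fun h => h.2.1 rfl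

theorem not_strictlyBetween_of_snd_ne {p t q : ℤ × ℤ} (hpq : p.2 = q.2) (ht : t.2 ≠ p.2) :
    ¬ strictlyBetween p t q := by
  rintro ⟨-, -, -, -, -, hlo, hhi⟩
  rw [← hpq, min_self] at hlo
  rw [← hpq, max_self] at hhi
  exact ht (le_antisymm hhi hlo)

theorem rookAttacks_of_snd_eq {B : Set Square} {r s : Square}
    (hB : ∀ t ∈ B, t = r ∨ t.2 ≠ r.2) (hrs : r ≠ s) (hs : r.2 = s.2) : rookAttacks B r s := by
  refine ⟨hrs, Or.inr hs, fun t ht => ?_⟩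
  rcases hB t ht with rfl | ht
  · exact not_strictlyBetween_left _ _
  · refine not_strictlyBetween_of_snd_ne (by simp [zpt, rz, hs]) ?_
    simpa [zpt, rz, Fin.val_inj] using ht

/-- Two rooks on two distinct ranks, with the white king on a third rank,
together attack every other square of those two ranks. -/
theorem two_rooks_cover_two_ranks
    (a c y₁ y₂ : Fin 8) (hy : y₁ ≠ y₂)
    (K : Square) (hK1 : K.2 ≠ y₁) (hK2 : K.2 ≠ y₂)
    (r₁ r₂ : Square) (h1 : r₁ = (a, y₁)) (h2 : r₂ = (c, y₂)) :
    ∀ s : Square, (s.2 = y₁ ∨ s.2 = y₂) → s ≠ r₁ → s ≠ r₂ →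
      rookAttacks {r₁, r₂, K} r₁ s ∨ rookAttacks {r₁, r₂, K} r₂ s := by
  subst h1 h2
  rintro s (hs | hs) hs₁ hs₂
  · left
    refine rookAttacks_of_snd_eq ?_ hs₁.symm hs.symm
    rintro t (rfl | rfl | rfl) <;> simp [hy.symm, hK1]
  · right
    refine rookAttacks_of_snd_eq ?_ hs₂.symm hs.symm
    rintro t (rfl | rfl | rfl) <;> simp [hy, hK2]
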